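/- Let Q₀ and Q₁ be quadratic forms bounded below and λ ∈ ℝ. Suppose that for every ψ in a form domain D there are ψ₀ ∈ dom Q₀ and ψ₁ ∈ dom Q₁ with Q(ψ) = Q₀(ψ₀) + Q₁(ψ₁) and ‖ψ‖² = ‖ψ₀‖² + ‖ψ₁‖². Then 𝒩(Q, λ) ≤ 𝒩(Q₀, λ) + 𝒩(Q₁, λ), where 𝒩(·, λ) denotes the number of Rayleigh quotients strictly below λ. -/
import Mathlib

open Module

lemma neg_decomp_aux (n : ℕ) :
    ∀ {H : Type*} [AddCommGroup H] [Module ℝ H] (q : H →ₗ[ℝ] H →ₗ[ℝ] ℝ),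
    (∀ x y, q x y = q y x) →
    ∀ (U : Submodule ℝ H) [FiniteDimensional ℝ U], finrank ℝ U = n →
    ∃ G N : Submodule ℝ H, G ≤ U ∧ N ≤ U ∧
      (∀ x ∈ G, x ≠ 0 → q x x < 0) ∧ (∀ x ∈ N, 0 ≤ q x x) ∧
      finrank ℝ U ≤ finrank ℝ G + finrank ℝ N := by
  induction n using Nat.strong_induction_on with
  | _ n ih =>
  intro H _ _ q hsym U _ hn
  by_cases hpos : ∀ x ∈ U, 0 ≤ q x x
  · exact ⟨⊥, U, bot_le, le_rfl, by simp, hpos, by simp⟩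
  push_neg at hpos
  obtain ⟨v, hvU, hv⟩ := hpos
  have hv0 : v ≠ 0 := by
    rintro rfl; simp at hv
  set f : U →ₗ[ℝ] ℝ := (q v).comp U.subtype with hf
  have hfv : f ⟨v, hvU⟩ = q v v := rfl
  have hrange : LinearMap.range f = ⊤ := by
    rw [eq_top_iff]
    rintro c -
    exact ⟨(c / (q v v)) • ⟨v, hvU⟩, by
      simp only [map_smul, hfv, smul_eq_mul]
      rw [div_mul_eq_mul_div, mul_div_assoc, div_self hv.ne, mul_one]⟩
  have hrk : finrank ℝ (LinearMap.range f) + finrank ℝ (LinearMap.ker f) = n := by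
    rw [LinearMap.finrank_range_add_finrank_ker, hn]
  rw [hrange, finrank_top, finrank_self] at hrk
  set U'' : Submodule ℝ H := (LinearMap.ker f).map U.subtype with hU''
  have hU''le : U'' ≤ U := Submodule.map_subtype_le _ _
  have hU''rk : finrank ℝ U'' = finrank ℝ (LinearMap.ker f) :=
    Submodule.finrank_map_subtype_eq _ _
  have hqv : ∀ x ∈ U'', q v x = 0 := by
    rintro x ⟨y, hy, rfl⟩
    exact hy
  have hvn : v ∉ U'' := fun hvm => absurd (hqv v hvm) (by linarith)
  obtain ⟨G', N', hG'le, hN'le, hG'neg, hN'pos, hdim'⟩ :=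
    ih (finrank ℝ U'') (by omega) q hsym U'' rfl
  have hvG' : v ∉ G' := fun h => hvn (hG'le h)
  refine ⟨G' ⊔ Submodule.span ℝ {v}, N', sup_le (hG'le.trans hU''le)
    ((Submodule.span_singleton_le_iff_mem _ _).2 hvU), hN'le.trans hU''le, ?_, hN'pos, ?_⟩
  · intro x hx hx0
    rw [Submodule.mem_sup] at hx
    obtain ⟨g, hg, s, hs, rfl⟩ := hx
    obtain ⟨t, rfl⟩ := Submodule.mem_span_singleton.1 hs
    have hvg : q v g = 0 := hqv g (hG'le hg)
    have hgv : q g v = 0 := (hsym g v).trans hvg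
    have hexp : q (g + t • v) (g + t • v) = q g g + t * t * q v v := by
      simp only [map_add, map_smul, LinearMap.add_apply, LinearMap.smul_apply,
        smul_eq_mul, hvg, hgv]
      ring
    rw [hexp]
    rcases eq_or_ne g 0 with rfl | hg0
    · have ht : t ≠ 0 := by
        rintro rfl; simp at hx0
      have : q (0 : H) 0 = 0 := by simp
      nlinarith [mul_self_pos.2 ht]
    · have h1 : q g g < 0 := hG'neg g hg hg0
      nlinarith [mul_self_nonneg t]
  · have hinf : G' ⊓ Submodule.span ℝ {v} = ⊥ := by
      rw [eq_bot_iff]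
      rintro x ⟨hxG, hxs⟩
      obtain ⟨t, rfl⟩ := Submodule.mem_span_singleton.1 hxs
      rcases eq_or_ne t 0 with rfl | ht
      · simp
      · have := Submodule.smul_mem G' t⁻¹ hxG
        rw [smul_smul, inv_mul_cancel₀ ht, one_smul] at this
        exact absurd this hvG'
    have : FiniteDimensional ℝ G' := Submodule.finiteDimensional_of_le (hG'le.trans hU''le)
    have hsup := Submodule.finrank_sup_add_finrank_inf_eq G' (Submodule.span ℝ {v})
    rw [hinf, finrank_bot, finrank_span_singleton hv0] at hsup
    omega

open Module

lemma step_rank {H X : Type*} [AddCommGroup H] [Module ℝ H] [AddCommGroup X] [Module ℝ X]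
    (W : Submodule ℝ H) [FiniteDimensional ℝ W] (F : H →ₗ[ℝ] X) :
    finrank ℝ (W.map F) + finrank ℝ ↥(W ⊓ LinearMap.ker F) = finrank ℝ W := by
  have h := LinearMap.finrank_range_add_finrank_ker (F.comp W.subtype)
  rw [LinearMap.range_comp, Submodule.range_subtype, LinearMap.ker_comp] at h
  have hker : Submodule.comap W.subtype (LinearMap.ker F)
      = Submodule.comap W.subtype (W ⊓ LinearMap.ker F) := by
    ext x
    simp only [Submodule.mem_comap, Submodule.mem_inf]
    exact ⟨fun hx => ⟨x.2, hx⟩, fun hx => hx.2⟩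
  rw [hker, LinearEquiv.finrank_eq
    (Submodule.comapSubtypeEquivOfLe (inf_le_left : W ⊓ LinearMap.ker F ≤ W))] at h
  exact h

/-- Bracketing eigenvalue-counting inequality 𝒩(Q,λ) ≤ 𝒩(Q₀,λ) + 𝒩(Q₁,λ): if the
quadratic form Q decomposes (through linear maps Φ₀, Φ₁ preserving the norm
squared) as Q₀ + Q₁, then any finite-dimensional subspace on which Q < λ‖·‖² is
dominated in dimension by such subspaces for Q₀ and Q₁. -/
theorem stmt17 {H H₀ H₁ : Type*}
    [NormedAddCommGroup H] [InnerProductSpace ℝ H]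
    [NormedAddCommGroup H₀] [InnerProductSpace ℝ H₀]
    [NormedAddCommGroup H₁] [InnerProductSpace ℝ H₁]
    (B : H →ₗ[ℝ] H →ₗ[ℝ] ℝ) (B₀ : H₀ →ₗ[ℝ] H₀ →ₗ[ℝ] ℝ) (B₁ : H₁ →ₗ[ℝ] H₁ →ₗ[ℝ] ℝ)
    (hBs : ∀ x y, B x y = B y x) (hB0s : ∀ x y, B₀ x y = B₀ y x)
    (hB1s : ∀ x y, B₁ x y = B₁ y x)
    (lam : ℝ) (Φ₀ : H →ₗ[ℝ] H₀) (Φ₁ : H →ₗ[ℝ] H₁)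
    (hdecomp : ∀ ψ : H, B ψ ψ = B₀ (Φ₀ ψ) (Φ₀ ψ) + B₁ (Φ₁ ψ) (Φ₁ ψ))
    (hnorm : ∀ ψ : H, ‖ψ‖ ^ 2 = ‖Φ₀ ψ‖ ^ 2 + ‖Φ₁ ψ‖ ^ 2)
    (G : Submodule ℝ H) [FiniteDimensional ℝ G]
    (hGneg : ∀ ψ ∈ G, ψ ≠ 0 → B ψ ψ < lam * ‖ψ‖ ^ 2) :
    ∃ (G₀ : Submodule ℝ H₀) (G₁ : Submodule ℝ H₁),
      FiniteDimensional ℝ G₀ ∧ FiniteDimensional ℝ G₁ ∧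
      (∀ ψ ∈ G₀, ψ ≠ 0 → B₀ ψ ψ < lam * ‖ψ‖ ^ 2) ∧
      (∀ ψ ∈ G₁, ψ ≠ 0 → B₁ ψ ψ < lam * ‖ψ‖ ^ 2) ∧
      Module.finrank ℝ G ≤ Module.finrank ℝ G₀ + Module.finrank ℝ G₁ := by
  classical
  set q₀ : H₀ →ₗ[ℝ] H₀ →ₗ[ℝ] ℝ := B₀ - lam • innerₗ H₀ with hq₀
  set q₁ : H₁ →ₗ[ℝ] H₁ →ₗ[ℝ] ℝ := B₁ - lam • innerₗ H₁ with hq₁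
  have hq₀app : ∀ x : H₀, q₀ x x = B₀ x x - lam * ‖x‖ ^ 2 := by
    intro x
    simp [hq₀, real_inner_self_eq_norm_sq]
  have hq₁app : ∀ x : H₁, q₁ x x = B₁ x x - lam * ‖x‖ ^ 2 := by
    intro x
    simp [hq₁, real_inner_self_eq_norm_sq]
  have hq₀sym : ∀ x y, q₀ x y = q₀ y x := by
    intro x y
    simp [hq₀, hB0s x y, real_inner_comm x y]
  have hq₁sym : ∀ x y, q₁ x y = q₁ y x := by
    intro x y
    simp [hq₁, hB1s x y, real_inner_comm x y]
  set U₀ : Submodule ℝ H₀ := G.map Φ₀ with hU₀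
  set U₁ : Submodule ℝ H₁ := G.map Φ₁ with hU₁
  obtain ⟨G₀, N₀, hG₀le, hN₀le, hG₀neg, hN₀pos, hdim₀⟩ :=
    neg_decomp_aux (finrank ℝ U₀) q₀ hq₀sym U₀ rfl
  obtain ⟨G₁, N₁, hG₁le, hN₁le, hG₁neg, hN₁pos, hdim₁⟩ :=
    neg_decomp_aux (finrank ℝ U₁) q₁ hq₁sym U₁ rfl
  haveI : FiniteDimensional ℝ G₀ := Submodule.finiteDimensional_of_le hG₀le
  haveI : FiniteDimensional ℝ G₁ := Submodule.finiteDimensional_of_le hG₁le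
  haveI : FiniteDimensional ℝ N₀ := Submodule.finiteDimensional_of_le hN₀le
  haveI : FiniteDimensional ℝ N₁ := Submodule.finiteDimensional_of_le hN₁le
  refine ⟨G₀, G₁, inferInstance, inferInstance, ?_, ?_, ?_⟩
  · intro ψ hψ hψ0
    have := hG₀neg ψ hψ hψ0
    rw [hq₀app] at this
    linarith
  · intro ψ hψ hψ0
    have := hG₁neg ψ hψ hψ0
    rw [hq₁app] at this
    linarith
  -- dimension count
  set F₀ : H →ₗ[ℝ] H₀ ⧸ N₀ := N₀.mkQ.comp Φ₀ with hF₀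
  set F₁ : H →ₗ[ℝ] H₁ ⧸ N₁ := N₁.mkQ.comp Φ₁ with hF₁
  set K₀ : Submodule ℝ H := G ⊓ LinearMap.ker F₀ with hK₀
  haveI : FiniteDimensional ℝ K₀ := Submodule.finiteDimensional_of_le inf_le_left
  -- step on G with F₀
  have h1 : finrank ℝ (G.map F₀) + finrank ℝ K₀ = finrank ℝ G := step_rank G F₀
  -- G.map F₀ = U₀.map N₀.mkQ
  have hmap₀ : G.map F₀ = U₀.map N₀.mkQ := by
    rw [hF₀, hU₀, Submodule.map_comp]
  -- step on U₀ with mkQ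
  have h2 : finrank ℝ (U₀.map N₀.mkQ) + finrank ℝ N₀ = finrank ℝ U₀ := by
    have := step_rank U₀ N₀.mkQ
    rwa [Submodule.ker_mkQ, inf_eq_right.2 hN₀le] at this
  have h2' : finrank ℝ (U₁.map N₁.mkQ) + finrank ℝ N₁ = finrank ℝ U₁ := by
    have := step_rank U₁ N₁.mkQ
    rwa [Submodule.ker_mkQ, inf_eq_right.2 hN₁le] at this
  -- step on K₀ with F₁ : the kernel part is ⊥
  have hbot : K₀ ⊓ LinearMap.ker F₁ = ⊥ := by
    rw [eq_bot_iff]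
    rintro ψ ⟨⟨hψG, hψ0⟩, hψ1⟩
    rw [Submodule.mem_bot]
    by_contra hne
    have hm0 : Φ₀ ψ ∈ N₀ := by
      have h0 : F₀ ψ = 0 := hψ0
      rwa [hF₀, LinearMap.comp_apply, Submodule.mkQ_apply,
        Submodule.Quotient.mk_eq_zero] at h0
    have hm1 : Φ₁ ψ ∈ N₁ := by
      have h0 : F₁ ψ = 0 := hψ1
      rwa [hF₁, LinearMap.comp_apply, Submodule.mkQ_apply,
        Submodule.Quotient.mk_eq_zero] at h0
    have hp0 := hN₀pos _ hm0
    have hp1 := hN₁pos _ hm1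
    rw [hq₀app] at hp0
    rw [hq₁app] at hp1
    have hneg := hGneg ψ hψG hne
    have hd := hdecomp ψ
    have hn : lam * ‖ψ‖ ^ 2 = lam * ‖Φ₀ ψ‖ ^ 2 + lam * ‖Φ₁ ψ‖ ^ 2 := by
      rw [hnorm ψ]; ring
    linarith
  have h3 : finrank ℝ (K₀.map F₁) = finrank ℝ K₀ := by
    have := step_rank K₀ F₁
    rw [hbot, finrank_bot, add_zero] at this
    exact this
  -- K₀.map F₁ ≤ U₁.map mkQ
  have hle : K₀.map F₁ ≤ U₁.map N₁.mkQ := by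
    rw [hF₁, hU₁, Submodule.map_comp]
    exact Submodule.map_mono (Submodule.map_mono inf_le_left)
  haveI : FiniteDimensional ℝ (U₁.map N₁.mkQ) := Module.Finite.map _ _
  have h4 : finrank ℝ K₀ ≤ finrank ℝ (U₁.map N₁.mkQ) := h3 ▸ Submodule.finrank_mono hle
  rw [hmap₀] at h1
  omega
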